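/- arXiv:2302.02911 — 3 statements merged into one kernel-verified Lean document; each statement's English description precedes it below -/
import Mathlib

section
/- Let L = A ⊕ B : ℝ^k ⊕ ℝ^{d-k} → ℝ^k ⊕ ℝ^{d-k} be linear with ‖A⁻¹‖ ≤ μ⁻¹ and ‖B‖ ≤ λ < μ. Then there exist D > 0 and ε₀ > 0 such that for all 0 < ε < ε₀ and all δ with Dε ≤ δ ≤ ε₀, any linear map L' = [[A+α, β],[γ, B+δ']] with max{‖α‖,‖β‖,‖γ‖,‖δ'‖} ≤ ε maps the cone C(δ⁻¹) = {(u,v) : ‖v‖ ≤ δ⁻¹‖u‖} into itself. -/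
set_option maxHeartbeats 1000000


/-- cone invariance. Let `L = A ⊕ B` on `ℝ^k ⊕ ℝ^{d−k}` with
`‖A⁻¹‖ ≤ μ⁻¹`, `‖B‖ ≤ λ < μ`. There are `D > 0`, `ε₀ > 0` such that for all
`0 < ε < ε₀` and `Dε ≤ δ ≤ ε₀`, any perturbed map `[[A+α, β],[γ, B+δ′]]` with all
perturbation blocks of norm `≤ ε` maps the cone `C(δ⁻¹) = {(u,v) : ‖v‖ ≤ δ⁻¹‖u‖}`
into itself. -/
theorem cone_invariance (k m : ℕ) (μ lam : ℝ) (hμ : 0 < μ) (hlam : lam < μ)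
    (A : EuclideanSpace ℝ (Fin k) ≃L[ℝ] EuclideanSpace ℝ (Fin k))
    (B : EuclideanSpace ℝ (Fin m) →L[ℝ] EuclideanSpace ℝ (Fin m))
    (hA : ‖(A.symm : EuclideanSpace ℝ (Fin k) →L[ℝ] EuclideanSpace ℝ (Fin k))‖ ≤ μ⁻¹)
    (hB : ‖B‖ ≤ lam) :
    ∃ D > 0, ∃ ε₀ > 0, ∀ ε : ℝ, 0 < ε → ε < ε₀ → ∀ δ : ℝ, D * ε ≤ δ → δ ≤ ε₀ →
      ∀ (α : EuclideanSpace ℝ (Fin k) →L[ℝ] EuclideanSpace ℝ (Fin k))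
        (β : EuclideanSpace ℝ (Fin m) →L[ℝ] EuclideanSpace ℝ (Fin k))
        (γ : EuclideanSpace ℝ (Fin k) →L[ℝ] EuclideanSpace ℝ (Fin m))
        (δ' : EuclideanSpace ℝ (Fin m) →L[ℝ] EuclideanSpace ℝ (Fin m)),
        ‖α‖ ≤ ε → ‖β‖ ≤ ε → ‖γ‖ ≤ ε → ‖δ'‖ ≤ ε →
          ∀ (u : EuclideanSpace ℝ (Fin k)) (v : EuclideanSpace ℝ (Fin m)),
            ‖v‖ ≤ δ⁻¹ * ‖u‖ →
            ‖γ u + B v + δ' v‖ ≤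
              δ⁻¹ * ‖(A : EuclideanSpace ℝ (Fin k) →L[ℝ] EuclideanSpace ℝ (Fin k)) u
                + α u + β v‖ := by
  set η := μ - lam with hηdef
  have hηpos : 0 < η := by simp only [hηdef]; linarith
  have hlam0 : 0 ≤ lam := le_trans (norm_nonneg B) hB
  refine ⟨4/η, by positivity, min (η/8) 1, by positivity, ?_⟩
  intro ε hε hεlt δ hδlo hδhi α β γ δ' hα hβ hγ hδ' u v hv
  have hmin1 : min (η/8) 1 ≤ η/8 := min_le_left _ _
  have hmin2 : min (η/8) 1 ≤ 1 := min_le_right _ _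
  have hδpos : 0 < δ := lt_of_lt_of_le (by positivity) hδlo
  have hdinv : 0 ≤ δ⁻¹ := by positivity
  have hδδ : δ * δ⁻¹ = 1 := mul_inv_cancel₀ (ne_of_gt hδpos)
  have hεδ : ε * δ⁻¹ ≤ η / 4 := by
    have h1 : ε ≤ η / 4 * δ := by
      have h := mul_le_mul_of_nonneg_left hδlo (by positivity : (0:ℝ) ≤ η/4)
      have he : η/4 * (4/η * ε) = ε := by field_simp
      linarith
    calc ε * δ⁻¹ ≤ (η / 4 * δ) * δ⁻¹ := by
          exact mul_le_mul_of_nonneg_right h1 hdinv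
      _ = η / 4 := by rw [mul_assoc, hδδ, mul_one]
  have hεδ2 : ε * δ ≤ η / 8 := by
    have hε1 : ε ≤ 1 := le_of_lt (lt_of_lt_of_le hεlt hmin2)
    calc ε * δ ≤ 1 * δ := mul_le_mul_of_nonneg_right hε1 (le_of_lt hδpos)
      _ = δ := one_mul δ
      _ ≤ η / 8 := le_trans hδhi hmin1
  have hkey : ε * δ + lam + 2 * ε + ε * δ⁻¹ ≤ μ := by
    have h2ε : 2 * ε ≤ η / 4 := by
      have := lt_of_lt_of_le hεlt hmin1; linarith
    have : η / 8 + lam + η / 4 + η / 4 ≤ μ := by simp only [hηdef] at *; linarith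
    linarith
  -- norm bounds
  have h1 : ‖γ u‖ ≤ ε * ‖u‖ :=
    le_trans (γ.le_opNorm u) (mul_le_mul_of_nonneg_right hγ (norm_nonneg u))
  have h2 : ‖B v‖ ≤ lam * ‖v‖ :=
    le_trans (B.le_opNorm v) (mul_le_mul_of_nonneg_right hB (norm_nonneg v))
  have h3 : ‖δ' v‖ ≤ ε * ‖v‖ :=
    le_trans (δ'.le_opNorm v) (mul_le_mul_of_nonneg_right hδ' (norm_nonneg v))
  have h4 : ‖α u‖ ≤ ε * ‖u‖ :=
    le_trans (α.le_opNorm u) (mul_le_mul_of_nonneg_right hα (norm_nonneg u))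
  have h5 : ‖β v‖ ≤ ε * ‖v‖ :=
    le_trans (β.le_opNorm v) (mul_le_mul_of_nonneg_right hβ (norm_nonneg v))
  have hAu : μ * ‖u‖ ≤ ‖(A : EuclideanSpace ℝ (Fin k) →L[ℝ] EuclideanSpace ℝ (Fin k)) u‖ := by
    have h := (A.symm : EuclideanSpace ℝ (Fin k) →L[ℝ] EuclideanSpace ℝ (Fin k)).le_opNorm
      ((A : EuclideanSpace ℝ (Fin k) →L[ℝ] EuclideanSpace ℝ (Fin k)) u)
    have hs : (A.symm : EuclideanSpace ℝ (Fin k) →L[ℝ] EuclideanSpace ℝ (Fin k))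
        ((A : EuclideanSpace ℝ (Fin k) →L[ℝ] EuclideanSpace ℝ (Fin k)) u) = u := by
      simp
    rw [hs] at h
    have hnn : (0:ℝ) ≤ ‖(A : EuclideanSpace ℝ (Fin k) →L[ℝ] EuclideanSpace ℝ (Fin k)) u‖ :=
      norm_nonneg _
    have h' : ‖u‖ ≤ μ⁻¹ * ‖(A : EuclideanSpace ℝ (Fin k) →L[ℝ] EuclideanSpace ℝ (Fin k)) u‖ :=
      le_trans h (mul_le_mul_of_nonneg_right hA hnn)
    have hμinv : μ * μ⁻¹ = 1 := mul_inv_cancel₀ (ne_of_gt hμ)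
    nlinarith
  have hLlow : μ * ‖u‖ - ε * ‖u‖ - ε * ‖v‖ ≤
      ‖(A : EuclideanSpace ℝ (Fin k) →L[ℝ] EuclideanSpace ℝ (Fin k)) u + α u + β v‖ := by
    have h := norm_add₃_le (a := (A : EuclideanSpace ℝ (Fin k) →L[ℝ] EuclideanSpace ℝ (Fin k)) u
      + α u + β v) (b := -(α u)) (c := -(β v))
    simp only [norm_neg] at h
    have he : (A : EuclideanSpace ℝ (Fin k) →L[ℝ] EuclideanSpace ℝ (Fin k)) u + α u + β v
        + -(α u) + -(β v) = (A : EuclideanSpace ℝ (Fin k) →L[ℝ] EuclideanSpace ℝ (Fin k)) u := by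
      abel
    rw [he] at h
    linarith
  have hup : ‖γ u + B v + δ' v‖ ≤ ε * ‖u‖ + lam * ‖v‖ + ε * ‖v‖ :=
    le_trans (norm_add₃_le) (by linarith)
  have hmid : ε * ‖u‖ + lam * ‖v‖ + ε * ‖v‖ ≤ δ⁻¹ * (μ * ‖u‖ - ε * ‖u‖ - ε * ‖v‖) := by
    have hδv : δ * ‖v‖ ≤ ‖u‖ := by
      have h := mul_le_mul_of_nonneg_left hv (le_of_lt hδpos)
      calc δ * ‖v‖ ≤ δ * (δ⁻¹ * ‖u‖) := h
        _ = ‖u‖ := by rw [← mul_assoc, hδδ, one_mul]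
    have hεv : ε * ‖v‖ ≤ ε * δ⁻¹ * ‖u‖ := by
      have h := mul_le_mul_of_nonneg_left hv (le_of_lt hε)
      calc ε * ‖v‖ ≤ ε * (δ⁻¹ * ‖u‖) := h
        _ = ε * δ⁻¹ * ‖u‖ := by ring
    have h6 : δ * (ε * ‖u‖ + lam * ‖v‖ + ε * ‖v‖) ≤ μ * ‖u‖ - ε * ‖u‖ - ε * ‖v‖ := by
      have ha : lam * (δ * ‖v‖) ≤ lam * ‖u‖ := mul_le_mul_of_nonneg_left hδv hlam0
      have hb : ε * (δ * ‖v‖) ≤ ε * ‖u‖ := mul_le_mul_of_nonneg_left hδv hε.le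
      have hc : (ε * δ + lam + 2 * ε + ε * δ⁻¹) * ‖u‖ ≤ μ * ‖u‖ :=
        mul_le_mul_of_nonneg_right hkey (norm_nonneg u)
      nlinarith [hεv]
    calc ε * ‖u‖ + lam * ‖v‖ + ε * ‖v‖
        = δ⁻¹ * (δ * (ε * ‖u‖ + lam * ‖v‖ + ε * ‖v‖)) := by
          rw [← mul_assoc, inv_mul_cancel₀ (ne_of_gt hδpos), one_mul]
      _ ≤ δ⁻¹ * (μ * ‖u‖ - ε * ‖u‖ - ε * ‖v‖) := mul_le_mul_of_nonneg_left h6 hdinv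
  calc ‖γ u + B v + δ' v‖ ≤ ε * ‖u‖ + lam * ‖v‖ + ε * ‖v‖ := hup
    _ ≤ δ⁻¹ * (μ * ‖u‖ - ε * ‖u‖ - ε * ‖v‖) := hmid
    _ ≤ _ := mul_le_mul_of_nonneg_left hLlow hdinv
end

section
/- In the setting of the cone invariance lemma: for 0 < σ < 1 there exist C, ε₀ > 0 such that for 0 < ε < ε₀, Dε ≤ δ ≤ ε₀, and any finite sequence L₁,…,L_j of perturbed maps [[A+α_i, β_i],[γ_i, B+δ_i]] with all perturbation blocks of norm ≤ ε, every unit vector v making angle at least δ with {0} × ℝ^{d-k} satisfies ‖Π(L_j ⋯ L₁ v)‖ ≥ C (μ − ε^{1−σ})^j δ, where Π is the orthogonal projection onto ℝ^k × {0}. -/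
/-!
Track the functional `W(u, v) = ‖u‖ - Kε‖v‖` along the orbit, with `K = 2 / (μ - λ)`. One step
multiplies `‖u‖` by at least `μ - ε` up to an error `ε‖v‖`, and `‖v‖` by at most `λ + ε` up to an
error `ε‖u‖`; since `ε^{1-σ}` dominates `ε` and `Kε²`, both errors are absorbed and `W` grows by a
factor at least `μ - ε^{1-σ}` per step. Initially `‖u₀‖ ≥ sin δ ≥ δ / 2` and `Kε‖v₀‖ ≤ Kε ≤ δ / 4`
once `4Kε ≤ δ`, so `W₀ ≥ δ / 4`, and `‖u_j‖ ≥ W_j` gives the bound with `C = 1 / 4`.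
-/

open Filter Topology Real

theorem Real.div_two_le_sin {x : ℝ} (h₀ : 0 ≤ x) (h₁ : x ≤ π / 2) : x / 2 ≤ sin x := by
  have hπ : 1 / 2 ≤ 2 / π := by
    rw [div_le_div_iff₀ (by norm_num) pi_pos]
    linarith [pi_le_four]
  nlinarith [mul_le_sin h₀ h₁]

section PerturbedBlockMap

variable {E F : Type*} [NormedAddCommGroup E] [NormedSpace ℝ E]
  [NormedAddCommGroup F] [NormedSpace ℝ F]

theorem ContinuousLinearEquiv.mul_norm_le_norm_apply {μ : ℝ} (hμ : 0 < μ) (A : E ≃L[ℝ] F)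
    (hA : ‖(A.symm : F →L[ℝ] E)‖ ≤ μ⁻¹) (x : E) : μ * ‖x‖ ≤ ‖A x‖ := by
  have hx : ‖x‖ ≤ μ⁻¹ * ‖A x‖ := by
    simpa using (A.symm : F →L[ℝ] E).le_of_opNorm_le hA (A x)
  calc μ * ‖x‖ ≤ μ * (μ⁻¹ * ‖A x‖) := by gcongr
    _ = ‖A x‖ := by field_simp

theorem norm_perturbed_horizontal_ge {μ ε : ℝ} {A α : E →L[ℝ] E} {β : F →L[ℝ] E}
    (hA : ∀ x, μ * ‖x‖ ≤ ‖A x‖) (hα : ‖α‖ ≤ ε) (hβ : ‖β‖ ≤ ε) (u : E) (v : F) :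
    (μ - ε) * ‖u‖ - ε * ‖v‖ ≤ ‖A u + α u + β v‖ := by
  have htri := norm_add₃_le (a := A u + α u + β v) (b := -α u) (c := -β v)
  rw [show A u + α u + β v + -α u + -β v = A u by abel, norm_neg, norm_neg] at htri
  linarith [hA u, α.le_of_opNorm_le hα u, β.le_of_opNorm_le hβ v]

theorem norm_perturbed_vertical_le {lam ε : ℝ} {γ : E →L[ℝ] F} {B δ : F →L[ℝ] F}
    (hB : ‖B‖ ≤ lam) (hγ : ‖γ‖ ≤ ε) (hδ : ‖δ‖ ≤ ε) (u : E) (v : F) :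
    ‖γ u + B v + δ v‖ ≤ ε * ‖u‖ + (lam + ε) * ‖v‖ := by
  linarith [norm_add₃_le (a := γ u) (b := B v) (c := δ v), γ.le_of_opNorm_le hγ u,
    B.le_of_opNorm_le hB v, δ.le_of_opNorm_le hδ v]

theorem cone_functional_step {μ lam ε κ g a b a' b' : ℝ} (hκ : 0 ≤ κ) (ha : 0 ≤ a) (hb : 0 ≤ b)
    (hg₁ : g ≤ μ - ε - κ * ε) (hg₂ : ε + κ * (lam + ε) ≤ g * κ)
    (ha' : (μ - ε) * a - ε * b ≤ a') (hb' : b' ≤ ε * a + (lam + ε) * b) :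
    g * (a - κ * b) ≤ a' - κ * b' := by
  nlinarith [mul_le_mul_of_nonneg_right hg₁ ha, mul_le_mul_of_nonneg_right hg₂ hb,
    mul_le_mul_of_nonneg_left hb' hκ]

theorem pow_mul_cone_functional_le {μ lam ε κ g : ℝ} {A : E →L[ℝ] E} {B : F →L[ℝ] F}
    (hA : ∀ x, μ * ‖x‖ ≤ ‖A x‖) (hB : ‖B‖ ≤ lam) {j : ℕ} {α : ℕ → E →L[ℝ] E}
    {β : ℕ → F →L[ℝ] E} {γ : ℕ → E →L[ℝ] F} {δ : ℕ → F →L[ℝ] F}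
    (hpert : ∀ i < j, ‖α i‖ ≤ ε ∧ ‖β i‖ ≤ ε ∧ ‖γ i‖ ≤ ε ∧ ‖δ i‖ ≤ ε) {u : ℕ → E} {v : ℕ → F}
    (hu : ∀ i < j, u (i + 1) = A (u i) + α i (u i) + β i (v i))
    (hv : ∀ i < j, v (i + 1) = γ i (u i) + B (v i) + δ i (v i))
    (hκ : 0 ≤ κ) (hg₀ : 0 ≤ g) (hg₁ : g ≤ μ - ε - κ * ε) (hg₂ : ε + κ * (lam + ε) ≤ g * κ) :
    g ^ j * (‖u 0‖ - κ * ‖v 0‖) ≤ ‖u j‖ - κ * ‖v j‖ :=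
  geom_le (u := fun i => ‖u i‖ - κ * ‖v i‖) hg₀ j fun i hi => by
    obtain ⟨hα, hβ, hγ, hδ⟩ := hpert i hi
    rw [hu i hi, hv i hi]
    exact cone_functional_step hκ (norm_nonneg _) (norm_nonneg _) hg₁ hg₂
      (norm_perturbed_horizontal_ge hA hα hβ _ _) (norm_perturbed_vertical_le hB hγ hδ _ _)

end PerturbedBlockMap

theorem eventually_rate_conditions {μ lam sigma K : ℝ} (hμ : 0 < μ) (hK : 1 < K * (μ - lam))
    (hσ₀ : 0 < sigma) (hσ₁ : sigma < 1) :
    ∀ᶠ ε in 𝓝[>] 0, 0 ≤ μ - ε ^ (1 - sigma) ∧ μ - ε ^ (1 - sigma) ≤ μ - ε - K * ε * ε ∧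
      ε + K * ε * (lam + ε) ≤ (μ - ε ^ (1 - sigma)) * (K * ε) := by
  have hcont : ContinuousAt (fun ε : ℝ => ε ^ (1 - sigma)) 0 :=
    Real.continuousAt_rpow_const _ _ (Or.inr (by linarith))
  have h₁ : ∀ᶠ ε in 𝓝 (0 : ℝ), ε ^ (1 - sigma) < μ :=
    hcont.eventually_lt continuousAt_const
      (by simpa [Real.zero_rpow (by linarith : 1 - sigma ≠ 0)])
  have h₂ : ∀ᶠ ε in 𝓝 (0 : ℝ), K * (ε + ε ^ (1 - sigma)) < K * (μ - lam) - 1 :=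
    (by fun_prop : ContinuousAt (fun ε : ℝ => K * (ε + ε ^ (1 - sigma))) 0).eventually_lt
      continuousAt_const (by simp [Real.zero_rpow (by linarith : 1 - sigma ≠ 0)]; linarith)
  have h₃ : ∀ᶠ ε in 𝓝 (0 : ℝ), ε ^ sigma * (1 + K * ε) < 1 :=
    (by fun_prop (disch := positivity) :
      ContinuousAt (fun ε : ℝ => ε ^ sigma * (1 + K * ε)) 0).eventually_lt
      continuousAt_const (by simp [Real.zero_rpow hσ₀.ne'])
  filter_upwards [nhdsWithin_le_nhds (h₁.and (h₂.and h₃)), self_mem_nhdsWithin]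
    with ε ⟨h₁, h₂, h₃⟩ (hε : 0 < ε)
  -- `ε = ε^{1-σ} ε^σ`, so `ε^σ (1 + Kε) < 1` says `ε + Kε² < ε^{1-σ}`
  have hsplit : ε ^ (1 - sigma) * ε ^ sigma = ε := by
    rw [← Real.rpow_add hε, sub_add_cancel, Real.rpow_one]
  refine ⟨by linarith, ?_, ?_⟩
  · nlinarith [mul_le_mul_of_nonneg_left h₃.le (Real.rpow_nonneg hε.le (1 - sigma))]
  · nlinarith [mul_lt_mul_of_pos_left h₂ hε]

/-- expansion transverse to the vertical. With `L = A ⊕ B` on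
`ℝ^k ⊕ ℝ^m` (`‖A⁻¹‖ ≤ μ⁻¹`, `‖B‖ ≤ λ < μ`) and `0 < σ < 1`, there are constants
`D, C, ε₀ > 0` such that for `0 < ε < ε₀`, `Dε ≤ δ ≤ ε₀`, and any finite sequence of
perturbed maps `L_i = [[A+α_i, β_i],[γ_i, B+δ_i]]` with all perturbation blocks of
norm `≤ ε`, every unit vector making angle at least `δ` with `{0} × ℝ^m` satisfies
`‖Π(L_j ⋯ L₁ v)‖ ≥ C (μ − ε^{1−σ})^j δ`, where `Π` is the orthogonal projection onto
`ℝ^k × {0}` (here `(u_i, v_i)` is the orbit of the initial vector `(u₀, v₀)`). -/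
theorem cone_expansion_estimate (k m : ℕ) (μ lam sigma : ℝ) (hμ : 0 < μ)
    (hlam : lam < μ) (hσ₀ : 0 < sigma) (hσ₁ : sigma < 1)
    (A : EuclideanSpace ℝ (Fin k) ≃L[ℝ] EuclideanSpace ℝ (Fin k))
    (B : EuclideanSpace ℝ (Fin m) →L[ℝ] EuclideanSpace ℝ (Fin m))
    (hA : ‖(A.symm : EuclideanSpace ℝ (Fin k) →L[ℝ] EuclideanSpace ℝ (Fin k))‖ ≤ μ⁻¹)
    (hB : ‖B‖ ≤ lam) :
    ∃ D > 0, ∃ C > 0, ∃ ε₀ > 0, ∀ ε : ℝ, 0 < ε → ε < ε₀ →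
      ∀ δ : ℝ, D * ε ≤ δ → δ ≤ ε₀ →
      ∀ (j : ℕ)
        (α : ℕ → (EuclideanSpace ℝ (Fin k) →L[ℝ] EuclideanSpace ℝ (Fin k)))
        (β : ℕ → (EuclideanSpace ℝ (Fin m) →L[ℝ] EuclideanSpace ℝ (Fin k)))
        (γ : ℕ → (EuclideanSpace ℝ (Fin k) →L[ℝ] EuclideanSpace ℝ (Fin m)))
        (δ' : ℕ → (EuclideanSpace ℝ (Fin m) →L[ℝ] EuclideanSpace ℝ (Fin m))),
        (∀ i < j, ‖α i‖ ≤ ε ∧ ‖β i‖ ≤ ε ∧ ‖γ i‖ ≤ ε ∧ ‖δ' i‖ ≤ ε) →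
      ∀ (u : ℕ → EuclideanSpace ℝ (Fin k)) (v : ℕ → EuclideanSpace ℝ (Fin m)),
        (∀ i < j, u (i + 1) =
            (A : EuclideanSpace ℝ (Fin k) →L[ℝ] EuclideanSpace ℝ (Fin k)) (u i)
              + α i (u i) + β i (v i)) →
        (∀ i < j, v (i + 1) = γ i (u i) + B (v i) + δ' i (v i)) →
        ‖u 0‖ ^ 2 + ‖v 0‖ ^ 2 = 1 →
        Real.sin δ ≤ ‖u 0‖ →
        C * (μ - ε ^ (1 - sigma)) ^ j * δ ≤ ‖u j‖ := by
  have hK : 1 < 2 / (μ - lam) * (μ - lam) := by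
    rw [div_mul_cancel₀ _ (sub_pos.2 hlam).ne']
    norm_num
  set K := 2 / (μ - lam)
  obtain ⟨ε₁, hε₁, hrate⟩ :=
    (nhdsGT_basis (0 : ℝ)).eventually_iff.1 (eventually_rate_conditions hμ hK hσ₀ hσ₁)
  have hKpos : 0 < K := pos_of_mul_pos_left (one_pos.trans hK) (sub_pos.2 hlam).le
  refine ⟨4 * K, by positivity, 1 / 4, by norm_num, min ε₁ 1, by positivity, ?_⟩
  intro ε hε hεε₀ δ hδD hδε₀ j α β γ δ' hpert u v hu hv hnorm hsin
  obtain ⟨hg₀, hg₁, hg₂⟩ := hrate ⟨hε, hεε₀.trans_le (min_le_left _ _)⟩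
  have hAx : ∀ x, μ * ‖x‖ ≤ ‖(A : EuclideanSpace ℝ (Fin k) →L[ℝ] EuclideanSpace ℝ (Fin k)) x‖ :=
    A.mul_norm_le_norm_apply hμ hA
  have hKε : 0 ≤ K * ε := by positivity
  have horbit := pow_mul_cone_functional_le hAx hB hpert hu hv hKε hg₀ hg₁ hg₂
  have hsinδ : δ / 2 ≤ Real.sin δ := Real.div_two_le_sin (hKε.trans (by linarith))
    (by linarith [min_le_right ε₁ 1, Real.pi_gt_three])
  have hv₀ : ‖v 0‖ ≤ 1 := by nlinarith [norm_nonneg (u 0), norm_nonneg (v 0)]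
  have hbase : δ / 4 ≤ ‖u 0‖ - K * ε * ‖v 0‖ := by
    nlinarith [mul_le_mul_of_nonneg_left hv₀ hKε]
  calc 1 / 4 * (μ - ε ^ (1 - sigma)) ^ j * δ = (μ - ε ^ (1 - sigma)) ^ j * (δ / 4) := by ring
    _ ≤ (μ - ε ^ (1 - sigma)) ^ j * (‖u 0‖ - K * ε * ‖v 0‖) := by gcongr
    _ ≤ ‖u j‖ - K * ε * ‖v j‖ := horbit
    _ ≤ ‖u j‖ := sub_le_self _ (by positivity)
end

section
/- With notation as above, if ‖A(z)‖, ‖A(z)⁻¹‖ ≤ e^η for all z, A is Lipschitz with respect to ρ_τ, and x, x′ lie in the same local stable set with ρ_τ(x,x′) ≤ e^{−nτ′} where τ′ ≥ 2τ + 2η + ln 2, then ‖Aⁿ(x) − Aⁿ(x′)‖ = O(e^{−τn − ηn}). -/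
/-- A two-sided subshift of finite type on the alphabet `Fin ℓ`. -/
def SFT {ℓ : ℕ} (T : Fin ℓ → Fin ℓ → Bool) : Type :=
  { x : ℤ → Fin ℓ // ∀ n : ℤ, T (x n) (x (n + 1)) = true }

/-- The left shift on a subshift of finite type. -/
def shiftSFT {ℓ : ℕ} (T : Fin ℓ → Fin ℓ → Bool) (x : SFT T) : SFT T :=
  ⟨fun n => x.1 (n + 1), fun n => by simpa [add_assoc] using x.2 (n + 1)⟩

/-- The cocycle product `Aⁿ(x) = A(σ^{n−1}x) ⋯ A(x)` with values in a group
(for continuous linear equivalences, multiplication is composition). -/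
def cocycle {X : Type*} {G : Type*} [Monoid G] (σ : X → X) (A : X → G) : ℕ → X → G
  | 0, _ => 1
  | n + 1, x => A (σ^[n] x) * cocycle σ A n x

private def prodSeq {E : Type*} [NormedAddCommGroup E] [NormedSpace ℝ E]
    (a : ℕ → (E →L[ℝ] E)) : ℕ → (E →L[ℝ] E)
  | 0 => 1
  | n + 1 => a n * prodSeq a n

private lemma prodSeq_norm_le {E : Type*} [NormedAddCommGroup E] [NormedSpace ℝ E]
    (a : ℕ → (E →L[ℝ] E)) (K : ℝ) (hK : 1 ≤ K) (ha : ∀ i, ‖a i‖ ≤ K) :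
    ∀ n, ‖prodSeq a n‖ ≤ K ^ n := by
  intro n
  induction n with
  | zero => simp only [prodSeq, pow_zero]; exact ContinuousLinearMap.norm_id_le
  | succ n ih =>
    calc ‖prodSeq a (n + 1)‖ ≤ ‖a n‖ * ‖prodSeq a n‖ := norm_mul_le _ _
      _ ≤ K * K ^ n := by
          apply mul_le_mul (ha n) ih (norm_nonneg _) (by linarith)
      _ = K ^ (n + 1) := by ring

private lemma prodSeq_sub_norm_le {E : Type*} [NormedAddCommGroup E] [NormedSpace ℝ E]
    (a b : ℕ → (E →L[ℝ] E)) (K ε : ℝ) (hK : 1 ≤ K) (hε : 0 ≤ ε)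
    (ha : ∀ i, ‖a i‖ ≤ K) (hb : ∀ i, ‖b i‖ ≤ K)
    (hab : ∀ i, ‖a i - b i‖ ≤ ε) :
    ∀ n, ‖prodSeq a n - prodSeq b n‖ ≤ n * K ^ n * ε := by
  intro n
  have hK0 : (0:ℝ) ≤ K := by linarith
  induction n with
  | zero => simp [prodSeq]
  | succ n ih =>
    have hKn : (0:ℝ) ≤ K ^ n := pow_nonneg hK0 n
    have step : prodSeq a (n + 1) - prodSeq b (n + 1)
        = a n * (prodSeq a n - prodSeq b n) + (a n - b n) * prodSeq b n := by
      simp [prodSeq, mul_sub, sub_mul]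
    calc ‖prodSeq a (n + 1) - prodSeq b (n + 1)‖
        ≤ ‖a n * (prodSeq a n - prodSeq b n)‖ + ‖(a n - b n) * prodSeq b n‖ := by
          rw [step]; exact norm_add_le _ _
      _ ≤ K * (n * K ^ n * ε) + ε * K ^ n := by
          apply add_le_add
          · calc ‖a n * (prodSeq a n - prodSeq b n)‖
                ≤ ‖a n‖ * ‖prodSeq a n - prodSeq b n‖ := norm_mul_le _ _
              _ ≤ K * (n * K ^ n * ε) := by
                  apply mul_le_mul (ha n) ih (norm_nonneg _) hK0
          · calc ‖(a n - b n) * prodSeq b n‖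
                ≤ ‖a n - b n‖ * ‖prodSeq b n‖ := norm_mul_le _ _
              _ ≤ ε * K ^ n := by
                  apply mul_le_mul (hab n) (prodSeq_norm_le b K hK hb n) (norm_nonneg _) hε
      _ ≤ ((n + 1 : ℕ) : ℝ) * K ^ (n + 1) * ε := by
          have h1 : K ^ n ≤ K ^ (n + 1) := pow_le_pow_right₀ hK (by omega)
          have hn0 : (0:ℝ) ≤ (n:ℝ) := Nat.cast_nonneg n
          have h2 : K * ((n:ℝ) * K ^ n * ε) = (n:ℝ) * K ^ (n + 1) * ε := by ring
          push_cast
          linarith [mul_le_mul_of_nonneg_left h1 hε]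

private lemma cocycle_coe {X : Type*} {E : Type*} [NormedAddCommGroup E] [NormedSpace ℝ E]
    (σ : X → X) (A : X → (E ≃L[ℝ] E)) (n : ℕ) (x : X) :
    ((cocycle σ A n x : E ≃L[ℝ] E) : E →L[ℝ] E)
      = prodSeq (fun i => ((A (σ^[i] x) : E ≃L[ℝ] E) : E →L[ℝ] E)) n := by
  induction n with
  | zero => rfl
  | succ n ih =>
    show ((A (σ^[n] x) * cocycle σ A n x : E ≃L[ℝ] E) : E →L[ℝ] E) = _
    rw [show ((A (σ^[n] x) * cocycle σ A n x : E ≃L[ℝ] E) : E →L[ℝ] E)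
        = ((A (σ^[n] x) : E ≃L[ℝ] E) : E →L[ℝ] E) *
          ((cocycle σ A n x : E ≃L[ℝ] E) : E →L[ℝ] E) from rfl, ih]
    rfl

private lemma shift_iter {ℓ : ℕ} (T : Fin ℓ → Fin ℓ → Bool) :
    ∀ (i : ℕ) (x : SFT T) (j : ℤ), ((shiftSFT T)^[i] x).1 j = x.1 (j + i) := by
  intro i
  induction i with
  | zero => intro x j; simp
  | succ i ih =>
    intro x j
    rw [Function.iterate_succ_apply, ih (shiftSFT T x) j]
    show x.1 (j + i + 1) = x.1 (j + (i + 1))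
    ring_nf

/-- key intermediate estimate for transverse Hölder continuity of
holonomies. If `‖A(z)‖, ‖A(z)⁻¹‖ ≤ e^η` for all `z`, `A` is Lipschitz w.r.t. `ρ_τ`,
and `x, x′` lie in the same local stable set with `ρ_τ(x,x′) ≤ e^{−nτ′}` where
`τ′ ≥ 2τ + 2η + ln 2`, then `‖Aⁿ(x) − Aⁿ(x′)‖ = O(e^{−τn − ηn})`. -/
theorem cocycle_difference_estimate {ℓ : ℕ} (T : Fin ℓ → Fin ℓ → Bool) (d : ℕ)
    (A : SFT T → (EuclideanSpace ℝ (Fin d) ≃L[ℝ] EuclideanSpace ℝ (Fin d)))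
    (η τ τ' Lip : ℝ) (hτ : 0 < τ) (hη : 0 ≤ η) (hLip : 0 ≤ Lip)
    (hbound : ∀ z : SFT T,
      ‖(A z : EuclideanSpace ℝ (Fin d) →L[ℝ] EuclideanSpace ℝ (Fin d))‖ ≤ Real.exp η ∧
      ‖((A z).symm : EuclideanSpace ℝ (Fin d) →L[ℝ] EuclideanSpace ℝ (Fin d))‖ ≤ Real.exp η)
    (hA : ∀ (y z : SFT T) (m : ℕ), (∀ j : ℤ, |j| < (m : ℤ) → y.1 j = z.1 j) →
      ‖(A y : EuclideanSpace ℝ (Fin d) →L[ℝ] EuclideanSpace ℝ (Fin d)) -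
        (A z : EuclideanSpace ℝ (Fin d) →L[ℝ] EuclideanSpace ℝ (Fin d))‖ ≤
          Lip * Real.exp (-τ * m))
    (hτ' : 2 * τ + 2 * η + Real.log 2 ≤ τ') :
    ∃ C > 0, ∀ (n : ℕ) (x x' : SFT T),
      (∀ j : ℤ, 0 ≤ j → x.1 j = x'.1 j) →
      (∀ j : ℤ, (|j| : ℝ) < n * τ' / τ → x.1 j = x'.1 j) →
      ‖((cocycle (shiftSFT T) A n x :
            EuclideanSpace ℝ (Fin d) ≃L[ℝ] EuclideanSpace ℝ (Fin d)) :
          EuclideanSpace ℝ (Fin d) →L[ℝ] EuclideanSpace ℝ (Fin d)) -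
        ((cocycle (shiftSFT T) A n x' :
            EuclideanSpace ℝ (Fin d) ≃L[ℝ] EuclideanSpace ℝ (Fin d)) :
          EuclideanSpace ℝ (Fin d) →L[ℝ] EuclideanSpace ℝ (Fin d))‖ ≤
        C * Real.exp (-(τ + η) * n) := by
  have hlog2 : (0:ℝ) < Real.log 2 := Real.log_pos (by norm_num)
  have hτ'pos : 0 < τ' := by linarith
  refine ⟨Lip * Real.exp τ + 1, by positivity, ?_⟩
  intro n x x' h1 h2
  set M : ℝ := n * τ' / τ with hMdef
  have hM0 : 0 ≤ M := by positivity
  set m : ℕ := ⌊M⌋₊ with hmdef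
  have hmM : (m : ℝ) ≤ M := Nat.floor_le hM0
  have hMm : M < m + 1 := Nat.lt_floor_add_one M
  -- agreement estimate for each shifted point
  have hab : ∀ i : ℕ,
      ‖((A ((shiftSFT T)^[i] x) : EuclideanSpace ℝ (Fin d) ≃L[ℝ] EuclideanSpace ℝ (Fin d)) :
          EuclideanSpace ℝ (Fin d) →L[ℝ] EuclideanSpace ℝ (Fin d)) -
        ((A ((shiftSFT T)^[i] x') : EuclideanSpace ℝ (Fin d) ≃L[ℝ] EuclideanSpace ℝ (Fin d)) :
          EuclideanSpace ℝ (Fin d) →L[ℝ] EuclideanSpace ℝ (Fin d))‖ ≤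
        Lip * Real.exp (-τ * m) := by
    intro i
    have agr : ∀ j : ℤ, |j| < ((m + i : ℕ) : ℤ) →
        ((shiftSFT T)^[i] x).1 j = ((shiftSFT T)^[i] x').1 j := by
      intro j hj
      rw [shift_iter, shift_iter]
      rcases le_or_gt 0 (j + i) with h | h
      · exact h1 _ h
      · apply h2
        have habs : |j + (i:ℤ)| = -(j + i) := abs_of_neg h
        have hjlow : -j ≤ |j| := neg_le_abs j
        have hInt : |j + (i:ℤ)| < (m : ℤ) := by
          rw [habs]
          push_cast at hj ⊢
          omega
        exact lt_of_lt_of_le (by exact_mod_cast hInt) hmM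
    refine le_trans (hA _ _ (m + i) agr) ?_
    apply mul_le_mul_of_nonneg_left _ hLip
    apply Real.exp_le_exp.2
    have : (0:ℝ) ≤ (i:ℝ) := Nat.cast_nonneg i
    push_cast
    nlinarith
  -- apply the product difference lemma
  have hKpos : (0:ℝ) < Real.exp η := Real.exp_pos η
  have hK1 : (1:ℝ) ≤ Real.exp η := Real.one_le_exp hη
  have hεnn : (0:ℝ) ≤ Lip * Real.exp (-τ * m) := by positivity
  have main := prodSeq_sub_norm_le
    (fun i => ((A ((shiftSFT T)^[i] x) : EuclideanSpace ℝ (Fin d) ≃L[ℝ] EuclideanSpace ℝ (Fin d)) :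
        EuclideanSpace ℝ (Fin d) →L[ℝ] EuclideanSpace ℝ (Fin d)))
    (fun i => ((A ((shiftSFT T)^[i] x') : EuclideanSpace ℝ (Fin d) ≃L[ℝ] EuclideanSpace ℝ (Fin d)) :
        EuclideanSpace ℝ (Fin d) →L[ℝ] EuclideanSpace ℝ (Fin d)))
    (Real.exp η) (Lip * Real.exp (-τ * m)) hK1 hεnn
    (fun i => (hbound _).1) (fun i => (hbound _).1) hab n
  rw [cocycle_coe, cocycle_coe]
  refine le_trans main ?_
  -- final arithmetic
  have e1 : Real.exp η ^ n = Real.exp (η * n) := by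
    rw [← Real.exp_nat_mul]; ring_nf
  have h2n : (n : ℝ) ≤ Real.exp (Real.log 2 * n) := by
    rw [mul_comm, Real.exp_nat_mul, Real.exp_log (by norm_num : (0:ℝ) < 2)]
    calc (n:ℝ) ≤ (2:ℝ) ^ n := by
          exact_mod_cast (Nat.lt_two_pow_self (n := n)).le
      _ = 2 ^ n := by norm_num
  have hm2 : Real.exp (-τ * m) ≤ Real.exp τ * Real.exp (-(n * τ')) := by
    rw [← Real.exp_add]
    apply Real.exp_le_exp.2
    have hτM : τ * M = n * τ' := by
      rw [hMdef]; field_simp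
    nlinarith [hτ.le]
  calc (n : ℝ) * Real.exp η ^ n * (Lip * Real.exp (-τ * m))
      ≤ Real.exp (Real.log 2 * n) * Real.exp (η * n) *
          (Lip * (Real.exp τ * Real.exp (-(n * τ')))) := by
        rw [e1]
        apply mul_le_mul
        · exact mul_le_mul h2n le_rfl (Real.exp_pos _).le (Real.exp_pos _).le
        · exact mul_le_mul_of_nonneg_left hm2 hLip
        · exact hεnn
        · positivity
    _ = (Lip * Real.exp τ) * Real.exp (Real.log 2 * n + η * n + -(n * τ')) := by
        rw [Real.exp_add, Real.exp_add]; ring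
    _ ≤ (Lip * Real.exp τ) * Real.exp (-(τ + η) * n) := by
        apply mul_le_mul_of_nonneg_left _ (by positivity)
        apply Real.exp_le_exp.2
        have hn0 : (0:ℝ) ≤ (n:ℝ) := Nat.cast_nonneg n
        nlinarith
    _ ≤ (Lip * Real.exp τ + 1) * Real.exp (-(τ + η) * n) := by
        apply mul_le_mul_of_nonneg_right _ (Real.exp_pos _).le
        linarith
end
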